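/- arXiv:1605.00227 — 4 statements merged into one kernel-verified Lean document; each statement's English description precedes it below -/
import Mathlib

section
/- For every natural number n ≥ 5, the simple graph on the vertex set {1, 2, …, n−1} with an edge between distinct i and j if and only if i + j is not divisible by n, contains a cycle passing through all n−1 vertices (i.e., a Hamiltonian cycle, hence in particular a cycle of length n−1). -/
/-- The generalized Dynkin diagram of `𝔅(C_n)`: vertices `1, …, n−1`, with an edge between
distinct `i` and `j` iff `n ∤ (i+j)`. -/
def dynkinGraph (n : ℕ) : SimpleGraph {i : ℕ // 1 ≤ i ∧ i ≤ n - 1} where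
  Adj a b := a ≠ b ∧ ¬ (n ∣ (a.1 + b.1))
  symm := ⟨by
    rintro a b ⟨h1, h2⟩
    exact ⟨h1.symm, by rwa [Nat.add_comm]⟩⟩
  loopless := ⟨fun a h => h.1 rfl⟩

/-!
The graph is the complete graph on `1, …, n−1` with the matching `i ↔ n−i` removed. With
`m = ⌊(n−1)/2⌋`, the cyclic order `1, 2, …, m, n−1, n−2, …, m+1` avoids that matching:
consecutive sums are `< n` on the ascending run and `> n` on the descending one, and the two
junctions give `m + (n−1)` and `(m+1) + 1`, which differ from `n` as soon as `m ≥ 2`,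
i.e. `n ≥ 5`.
Transporting the standard cycle of `cycleGraph (n−1)` along this bijection gives the
Hamiltonian cycle.
-/

open Function

lemma coe_finRotate_eq_ite {N : ℕ} (i : Fin N) :
    (finRotate N i : ℕ) = if (i : ℕ) + 1 = N then 0 else (i : ℕ) + 1 := by
  cases N with
  | zero => exact i.elim0
  | succ N => rw [coe_finRotate]; simp [Fin.ext_iff]

namespace SimpleGraph

variable {V : Type*} {G : SimpleGraph V}

lemma cycleGraph.isHamiltonianCycle_cycle (m : ℕ) : (cycleGraph.cycle m).IsHamiltonianCycle :=
  Walk.isHamiltonianCycle_iff_isCycle_and_length_eq.2 ⟨cycleGraph.isCycle_cycle, by simp⟩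

def cycleGraph.homOfAdjSucc {m : ℕ} (f : Fin (m + 2) → V)
    (hf : ∀ i, G.Adj (f i) (f (i + 1))) :
    cycleGraph (m + 2) →g G where
  toFun := f
  map_rel' := by
    rintro u v (huv | hvu)
    · rw [sub_eq_iff_eq_add'.1 huv]
      exact (hf v).symm
    · rw [sub_eq_iff_eq_add'.1 hvu]
      exact hf u

theorem exists_isHamiltonianCycle_of_bijective [DecidableEq V] {N : ℕ} (hN : 3 ≤ N)
    (f : Fin N → V) (hf : Bijective f) (hadj : ∀ i, G.Adj (f i) (f (finRotate N i))) :
    ∃ (v : V) (c : G.Walk v v), c.IsHamiltonianCycle := by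
  obtain ⟨m, rfl⟩ : ∃ m, N = m + 3 := ⟨N - 3, by omega⟩
  let φ := cycleGraph.homOfAdjSucc f fun i => by simpa [finRotate_apply] using hadj i
  exact ⟨_, _, (cycleGraph.isHamiltonianCycle_cycle m).map (f := φ) hf⟩

end SimpleGraph

lemma dynkinGraph_adj_iff {n : ℕ} {a b : {i : ℕ // 1 ≤ i ∧ i ≤ n - 1}} :
    (dynkinGraph n).Adj a b ↔ a ≠ b ∧ a.1 + b.1 ≠ n := by
  have := a.2
  have := b.2
  refine and_congr_right fun _ => ⟨fun h heq => h (by rw [heq]), fun h hdvd => h ?_⟩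
  exact Nat.eq_of_dvd_of_lt_two_mul (by omega) hdvd (by omega)

def cycleVertex (n k : ℕ) : ℕ := if k < (n - 1) / 2 then k + 1 else n + (n - 1) / 2 - 1 - k

lemma cycleVertex_mem {n k : ℕ} (hk : k < n - 1) :
    1 ≤ cycleVertex n k ∧ cycleVertex n k ≤ n - 1 := by
  unfold cycleVertex
  split_ifs <;> omega

def dynkinCycle (n : ℕ) (k : Fin (n - 1)) : {i : ℕ // 1 ≤ i ∧ i ≤ n - 1} :=
  ⟨cycleVertex n k, cycleVertex_mem k.2⟩

lemma dynkinCycle_bijective (n : ℕ) : Bijective (dynkinCycle n) := by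
  refine ⟨fun k l h => ?_, fun v => ?_⟩
  · have h := congrArg Subtype.val h
    simp only [dynkinCycle, cycleVertex] at h
    ext
    have := k.2
    have := l.2
    split_ifs at h <;> omega
  · have := v.2
    refine ⟨⟨if v.1 ≤ (n - 1) / 2 then v.1 - 1 else n + (n - 1) / 2 - 1 - v.1,
      by split_ifs <;> omega⟩, ?_⟩
    ext
    simp only [dynkinCycle, cycleVertex]
    split_ifs <;> omega

lemma dynkinCycle_adj {n : ℕ} (hn : 5 ≤ n) (k : Fin (n - 1)) :
    (dynkinGraph n).Adj (dynkinCycle n k) (dynkinCycle n (finRotate _ k)) := by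
  rw [dynkinGraph_adj_iff, Ne, Subtype.ext_iff]
  simp only [dynkinCycle, cycleVertex, coe_finRotate_eq_ite]
  have := k.2
  split_ifs <;> omega

/-- For `n ≥ 5` the generalized Dynkin diagram of `𝔅(C_n)` contains a Hamiltonian cycle,
in particular a cycle through all `n−1` vertices. -/
theorem stmt_9 (n : ℕ) (hn : 5 ≤ n) :
    ∃ (v : {i : ℕ // 1 ≤ i ∧ i ≤ n - 1}) (c : (dynkinGraph n).Walk v v),
      c.IsHamiltonianCycle :=
  SimpleGraph.exists_isHamiltonianCycle_of_bijective (by omega) (dynkinCycle n)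
    (dynkinCycle_bijective n) (dynkinCycle_adj hn)
end

section
/- Let m, p, n be positive natural numbers with p ∣ m, n ≥ 3, and realize G(m,p,n) as the subgroup of (Fin n → ZMod m) ⋊ S_n of pairs (ν,σ) with Σ ν(i) in the subgroup generated by p. Then for all k, l ∈ ZMod m and all pairs i < j and s < t in Fin n, the elements θ^k(ij) := (k·(e_i − e_j), (i j)) and θ^l(st) := (l·(e_s − e_t), (s t)) are conjugate in G(m,p,n). -/
/-!
Conjugating by the permutation `σ ∈ S_n` moves `θ^k(ij)` to `θ^k(σi σj)`, and `S_n` is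
2-transitive, so it suffices to change the exponent. Conjugating `θ^k(st)` by the diagonal
element `c (e_s - e_r)` gives `θ^(k+c)(st)` as long as `r ∉ {s, t}`; this element has
coordinate sum `0`, so it lies in `G(m,p,n)`, and a third index `r` exists because `n ≥ 3`.
-/

/-- Permutation action of `Equiv.Perm (Fin n)` on `Fin n → ZMod m`, as multiplicative
automorphisms of the (multiplicatively written) group of exponent vectors. -/
def permAut (m n : ℕ) : Equiv.Perm (Fin n) →* MulAut (Multiplicative (Fin n → ZMod m)) where
  toFun σ :=
    { toFun := fun ν => Multiplicative.ofAdd (Multiplicative.toAdd ν ∘ σ.symm)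
      invFun := fun ν => Multiplicative.ofAdd (Multiplicative.toAdd ν ∘ σ)
      left_inv := fun ν => by
        show Multiplicative.ofAdd ((Multiplicative.toAdd ν ∘ ⇑σ.symm) ∘ ⇑σ) = ν
        simp [Function.comp_def]
      right_inv := fun ν => by
        show Multiplicative.ofAdd ((Multiplicative.toAdd ν ∘ ⇑σ) ∘ ⇑σ.symm) = ν
        simp [Function.comp_def]
      map_mul' := fun ν μ => rfl }
  map_one' := rfl
  map_mul' := fun σ τ => rfl

/-- The wreath product `(ZMod m)^n ⋊ S_n`. -/
abbrev Wreath (m n : ℕ) := SemidirectProduct (Multiplicative (Fin n → ZMod m))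
  (Equiv.Perm (Fin n)) (permAut m n)

/-- Sum of the exponent vector, a group homomorphism on the wreath product. -/
def sumHom (m n : ℕ) : Wreath m n →* Multiplicative (ZMod m) where
  toFun x := Multiplicative.ofAdd (∑ i, Multiplicative.toAdd x.left i)
  map_one' := by simp
  map_mul' x y := by
    show Multiplicative.ofAdd (∑ i, (Multiplicative.toAdd x.left +
        Multiplicative.toAdd y.left ∘ (x.right).symm) i) = _
    rw [← ofAdd_add]
    congr 1
    simp only [Pi.add_apply]
    rw [Finset.sum_add_distrib]
    congr 1
    exact Fintype.sum_equiv x.right.symm _ _ (fun i => rfl)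

/-- The complex reflection group `G(m,p,n)` realized as a subgroup of the wreath product. -/
def Gmpn (m p n : ℕ) : Subgroup (Wreath m n) :=
  (AddSubgroup.toSubgroup (AddSubgroup.zmultiples ((p : ZMod m)))).comap (sumHom m n)

/-- The reflection `θ^k(ij)` in the wreath product. -/
def theta {m n : ℕ} (k : ZMod m) (i j : Fin n) : Wreath m n :=
  ⟨Multiplicative.ofAdd (k • (Pi.single i 1 - Pi.single j 1)), Equiv.swap i j⟩
open SemidirectProduct

section

variable {m n : ℕ}

lemma permAut_apply (σ : Equiv.Perm (Fin n)) (ν : Multiplicative (Fin n → ZMod m)) :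
    permAut m n σ ν = Multiplicative.ofAdd (Multiplicative.toAdd ν ∘ σ.symm) :=
  rfl

lemma theta_eq_inl_mul_inr (k : ZMod m) (i j : Fin n) :
    theta k i j =
      inl (Multiplicative.ofAdd (k • (Pi.single i 1 - Pi.single j 1))) * inr (Equiv.swap i j) :=
  mk_eq_inl_mul_inr _ _

lemma inr_mul_theta_mul_inr_inv (σ : Equiv.Perm (Fin n)) (k : ZMod m) (i j : Fin n) :
    inr σ * theta k i j * (inr σ)⁻¹ = theta k (σ i) (σ j) := by
  have hvec : permAut m n σ (Multiplicative.ofAdd (k • (Pi.single i 1 - Pi.single j 1))) =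
      Multiplicative.ofAdd (k • (Pi.single (σ i) 1 - Pi.single (σ j) 1)) := by
    rw [permAut_apply, toAdd_ofAdd, Pi.smul_comp, Pi.sub_comp, Pi.single_comp_equiv,
      Pi.single_comp_equiv, Equiv.symm_symm]
  rw [theta_eq_inl_mul_inr, theta_eq_inl_mul_inr, ← hvec, Equiv.swap_apply_apply, inl_aut,
    map_mul, map_mul, map_inv]
  group

lemma inl_mul_theta_mul_inl_inv {r s t : Fin n} (hrs : r ≠ s) (hrt : r ≠ t) (c k : ZMod m) :
    inl (Multiplicative.ofAdd (c • (Pi.single s 1 - Pi.single r 1))) * theta k s t *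
      (inl (Multiplicative.ofAdd (c • (Pi.single s 1 - Pi.single r 1))))⁻¹ = theta (k + c) s t := by
  have hswap : ((Pi.single s 1 - Pi.single r 1 : Fin n → ZMod m)) ∘ (Equiv.swap s t).symm =
      Pi.single t 1 - Pi.single r 1 := by
    rw [Pi.sub_comp, Pi.single_comp_equiv, Pi.single_comp_equiv]
    simp [Equiv.swap_apply_of_ne_of_ne hrs hrt]
  ext1
  · rw [← map_inv, mul_left, mul_left, left_inl, left_inl, right_inl, map_one, MulAut.one_apply]
    simp only [theta, permAut_apply, mul_right, right_inl, one_mul, toAdd_inv, toAdd_ofAdd,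
      Pi.neg_comp, Pi.smul_comp, hswap, ← ofAdd_add]
    congr 1
    module
  · rfl

lemma mem_Gmpn_of_sum_eq_zero (p : ℕ) {x : Wreath m n}
    (hx : ∑ i, Multiplicative.toAdd x.left i = 0) : x ∈ Gmpn m p n := by
  show sumHom m n x ∈ (AddSubgroup.zmultiples (p : ZMod m)).toSubgroup
  simp only [sumHom, MonoidHom.coe_mk, OneHom.coe_mk, hx, ofAdd_zero]
  exact one_mem _

end

lemma exists_ne_and_ne_of_three_le_card {α : Type*} [Fintype α] [DecidableEq α]
    (h : 3 ≤ Fintype.card α) (a b : α) : ∃ c, c ≠ a ∧ c ≠ b := by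
  obtain ⟨c, -, hc⟩ := Finset.exists_mem_notMem_of_card_lt_card
    (s := ({a, b} : Finset α)) (t := Finset.univ)
    (by rw [Finset.card_univ]; exact Finset.card_le_two.trans_lt (by omega))
  exact ⟨c, by simpa [not_or] using hc⟩

theorem stmt_12_general (m p n : ℕ) (hn : 3 ≤ n)
    (k l : ZMod m) (i j s t : Fin n) (hij : i < j) (hst : s < t) :
    ∃ g ∈ Gmpn m p n, g * theta k i j * g⁻¹ = theta l s t := by
  obtain ⟨r, hrs, hrt⟩ := exists_ne_and_ne_of_three_le_card (by simpa using hn) s t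
  obtain ⟨σ, hσi, hσj⟩ := MulAction.is_two_pretransitive_iff.mp
    (Equiv.Perm.isMultiplyPretransitive (Fin n) 2) hij.ne hst.ne
  set a : Multiplicative (Fin n → ZMod m) :=
    Multiplicative.ofAdd ((l - k) • (Pi.single s 1 - Pi.single r 1))
  refine ⟨inl a * inr σ, mul_mem ?_ ?_, ?_⟩
  · refine mem_Gmpn_of_sum_eq_zero p ?_
    simp [a, ← Finset.mul_sum, Finset.sum_sub_distrib]
  · exact mem_Gmpn_of_sum_eq_zero p (by simp)
  · calc inl a * inr σ * theta k i j * (inl a * inr σ)⁻¹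
          = inl a * (inr σ * theta k i j * (inr σ)⁻¹) * (inl a)⁻¹ := by group
      _ = theta l s t := by
        rw [inr_mul_theta_mul_inr_inv, ← Equiv.Perm.smul_def, ← Equiv.Perm.smul_def, hσi, hσj,
          inl_mul_theta_mul_inl_inv hrs hrt, add_sub_cancel]

/-- For `n ≥ 3`, all order-two reflections `θ^k(ij)` (`i < j`) are conjugate
in `G(m,p,n)`. -/
theorem stmt_12 (m p n : ℕ) (hm : 0 < m) (hp : 0 < p) (hpm : p ∣ m) (hn : 3 ≤ n)
    (k l : ZMod m) (i j s t : Fin n) (hij : i < j) (hst : s < t) :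
    ∃ g ∈ Gmpn m p n, g * theta k i j * g⁻¹ = theta l s t :=
  stmt_12_general m p n hn k l i j s t hij hst
end

section
/- Let m, p be positive natural numbers with p ∣ m and p odd, and realize G(m,p,2) as the subgroup of (ZMod m × ZMod m) ⋊ S_2 of pairs (ν,σ) with ν₁ + ν₂ in the subgroup generated by p. Then for all k, l ∈ ZMod m the reflections θ^k(12) := ((k,−k),(1 2)) and θ^l(12) := ((l,−l),(1 2)) are conjugate in G(m,p,2). -/
/-- For `p ∣ m` odd, all reflections `θ^k(12)` are conjugate in `G(m,p,2)`. -/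
theorem stmt_13 (m p : ℕ) (hm : 0 < m) (hp : 0 < p) (hpm : p ∣ m) (hodd : Odd p)
    (k l : ZMod m) :
    ∃ g ∈ Gmpn m p 2, g * theta k 0 1 * g⁻¹ = theta l 0 1 := by
  haveI : NeZero m := ⟨hm.ne'⟩
  obtain ⟨t, ht⟩ := hodd
  set d : ZMod m := l - k with hd
  set a : ZMod m := ((t : ZMod m) + 1) * d with ha
  set b : ZMod m := (p : ZMod m) * d - a with hb
  have hab : a + b = (p : ZMod m) * d := by rw [hb]; ring
  have hamb : a - b = d := by
    rw [hb, ha, ht]; push_cast; ring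
  refine ⟨⟨Multiplicative.ofAdd ![a, b], 1⟩, ?_, ?_⟩
  · show Multiplicative.toAdd (sumHom m 2 _) ∈ AddSubgroup.zmultiples ((p : ZMod m))
    have : Multiplicative.toAdd (sumHom m 2 (⟨Multiplicative.ofAdd ![a, b], 1⟩ : Wreath m 2))
        = a + b := by
      show (∑ i, (![a, b]) i) = a + b
      simp [Fin.sum_univ_two]
    rw [this, hab]
    refine ⟨(d.val : ℤ), ?_⟩
    show (d.val : ℤ) • (p : ZMod m) = (p : ZMod m) * d
    rw [zsmul_eq_mul, Int.cast_natCast, ZMod.natCast_val, ZMod.cast_id]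
    ring
  · have hext : ∀ x y : Wreath m 2, x.left = y.left → x.right = y.right → x = y := by
      rintro ⟨x1, x2⟩ ⟨y1, y2⟩ h1 h2
      cases h1; cases h2; rfl
    apply hext
    · show Multiplicative.ofAdd (![a, b] + k • (Pi.single 0 1 - Pi.single 1 1)
          + (-(![a, b])) ∘ (Equiv.swap (0 : Fin 2) 1))
        = Multiplicative.ofAdd (l • (Pi.single 0 1 - Pi.single 1 1))
      congr 1
      funext i
      have htz : (p : ZMod m) = 2 * t + 1 := by rw [ht]; push_cast; ring
      fin_cases i <;>
        simp [Equiv.swap_apply_left, Equiv.swap_apply_right, Pi.single_apply,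
          Matrix.vecHead, Matrix.vecTail, Function.comp] <;>
        first
          | linear_combination hamb
          | linear_combination (2 * l - 2 * k) * htz
          | linear_combination (k - l) * htz
          | linear_combination (2 * k - 2 * l) * htz
          | linear_combination (l - k) * htz
    · show Equiv.swap (0 : Fin 2) 1 * 1 = Equiv.swap 0 1
      simp
end

section
/- Let m, p be positive natural numbers with p ∣ m and p even (so m is even). Realize G(m,p,2) inside (ZMod m × ZMod m) ⋊ S_2 as above. If θ^k(12) := ((k,−k),(1 2)) and θ^l(12) := ((l,−l),(1 2)) are conjugate in G(m,p,2), then k and l have the same parity, i.e., k − l lies in the additive subgroup of ZMod m generated by 2. -/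
lemma two_mul_mem (m : ℕ) (hm : 0 < m) (a : ZMod m) :
    2 * a ∈ AddSubgroup.zmultiples (2 : ZMod m) := by
  haveI : NeZero m := ⟨hm.ne.symm⟩
  exact ⟨(a.val : ℤ), by
    show (a.val : ℤ) • (2 : ZMod m) = 2 * a
    rw [zsmul_eq_mul]; push_cast [ZMod.natCast_val]; ring⟩

/-- For `p ∣ m` even, if `θ^k(12)` and `θ^l(12)` are conjugate in `G(m,p,2)` then
`k` and `l` have the same parity, i.e. `k − l` is an additive multiple of `2` in `ZMod m`. -/
theorem stmt_14 (m p : ℕ) (hm : 0 < m) (hp : 0 < p) (hpm : p ∣ m) (heven : Even p)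
    (k l : ZMod m)
    (hconj : ∃ g ∈ Gmpn m p 2, g * theta k 0 1 * g⁻¹ = theta l 0 1) :
    k - l ∈ AddSubgroup.zmultiples (2 : ZMod m) := by
  haveI : NeZero m := ⟨hm.ne.symm⟩
  obtain ⟨g, hg, hc⟩ := hconj
  have hc' : g * theta k 0 1 = theta l 0 1 * g := mul_inv_eq_iff_eq_mul.mp hc
  set ν := Multiplicative.toAdd g.left with hν
  set δ : Fin 2 → ZMod m := Pi.single 0 1 - Pi.single 1 1 with hδ
  have hleft := congrArg SemidirectProduct.left hc'
  have h0 : ν 0 + (k • δ) (g.right.symm 0) = l • δ 0 + ν ((Equiv.swap (0:Fin 2) 1) 0) :=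
    congrFun (congrArg Multiplicative.toAdd hleft) 0
  have hδ0 : δ 0 = 1 := by simp [hδ]
  have hδ1 : δ 1 = -1 := by simp [hδ]
  have hswap : (Equiv.swap (0:Fin 2) 1) 0 = 1 := by simp
  -- sum condition
  obtain ⟨t, ht⟩ := hg
  have hsum : t • ((p:ℕ) : ZMod m) = ν 0 + ν 1 := by
    have : Multiplicative.toAdd (sumHom m 2 g) = ν 0 + ν 1 := by
      show (∑ i, ν i) = ν 0 + ν 1
      rw [Fin.sum_univ_two]
    rw [← this]; exact ht
  obtain ⟨s, hs⟩ := heven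
  have hsum2 : ν 0 + ν 1 ∈ AddSubgroup.zmultiples (2 : ZMod m) := by
    refine ⟨t * s, ?_⟩
    rw [← hsum, hs]
    show (t * s) • (2 : ZMod m) = t • (((s + s : ℕ)) : ZMod m)
    push_cast
    rw [zsmul_eq_mul, zsmul_eq_mul]; push_cast; ring
  have h2 : g.right.symm 0 = 0 ∨ g.right.symm 0 = 1 := by omega
  rcases h2 with h | h
  · simp only [Pi.smul_apply] at h0
    rw [h, hδ0, hswap] at h0
    have hl : k - l = (ν 0 + ν 1) - 2 * ν 0 := by
      have : ν 0 + k * 1 = l * 1 + ν 1 := by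
        simpa [smul_eq_mul] using h0
      linear_combination this
    rw [hl]
    exact sub_mem hsum2 (two_mul_mem m hm _)
  · simp only [Pi.smul_apply] at h0
    rw [h, hδ1, hδ0, hswap] at h0
    have hl : k - l = 2 * k - ((ν 0 + ν 1) - 2 * ν 1) := by
      have : ν 0 + k * (-1) = l * 1 + ν 1 := by
        simpa [smul_eq_mul] using h0
      linear_combination this
    rw [hl]
    exact sub_mem (two_mul_mem m hm _) (sub_mem hsum2 (two_mul_mem m hm _))
end
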